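/- Let m ≥ 1 be an integer and γ ∈ (0, π/2) with γ < π/(2m), and let p = (R sin ψ, R cos ψ) ∈ W_γ with R > 0 and π/2 − γ < ψ < π/2. Then every closed 2m-bounce billiard path based at p has total length 2R·sin(mγ); moreover there are at most two such paths, and if there are two then one is the reverse of the other. -/

import Mathlib

open Real

noncomputable section

/-- The Euclidean plane. -/
abbrev E2 := EuclideanSpace ℝ (Fin 2)

/-- Construct a point of the plane from its coordinates. -/
def pt (x y : ℝ) : E2 := WithLp.toLp 2 ![x, y]

/-- The open wedge of opening angle `γ`, bounded by the horizontal line `{y = 0}`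
and the line `{y = x·tan γ}`. -/
def wedge (γ : ℝ) : Set E2 := {p | 0 < p 0 ∧ 0 < p 1 ∧ p 1 < p 0 * Real.tan γ}

/-- A direction vector of the boundary line: the horizontal line if `horiz`, the
line `{y = x·tan γ}` otherwise. -/
def lineDir (γ : ℝ) (horiz : Bool) : E2 :=
  if horiz then pt 1 0 else pt (Real.cos γ) (Real.sin γ)

/-- Membership of the corresponding boundary line. -/
def onBoundary (γ : ℝ) (horiz : Bool) (p : E2) : Prop :=
  if horiz then p 1 = 0 else p 1 = p 0 * Real.tan γ

/-- The linear reflection of `ℝ²` across the `1`-dimensional subspace spanned by `d`,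
applied to `v` (for `d ≠ 0`). -/
def reflDir (d v : E2) : E2 :=
  (2 * (inner ℝ v d : ℝ) / (inner ℝ d d : ℝ)) • d - v

/-- A closed `n`-bounce billiard path based at the point `p` of the wedge `W_γ`:
a sequence `q 0 = p, q 1, …, q n, q (n+1) = p` with consecutive points distinct,
whose intermediate points lie alternately on the two boundary lines (minus the
vertex), whose open segments lie in the open wedge, and which satisfies the law
of reflection at each bounce. -/
structure ClosedBounce (γ : ℝ) (p : E2) (n : ℕ) where
  q : ℕ → E2
  /-- `horiz k` records whether the `k`-th bounce is on the horizontal line `ℓ₀`. -/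
  horiz : ℕ → Bool
  alt : ∀ k, 1 ≤ k → k < n → horiz (k + 1) = !horiz k
  start : q 0 = p
  closes : q (n + 1) = p
  distinct : ∀ k ≤ n, q k ≠ q (k + 1)
  bounce_ne_vertex : ∀ k, 1 ≤ k → k ≤ n → q k ≠ 0
  onLine : ∀ k, 1 ≤ k → k ≤ n → onBoundary γ (horiz k) (q k)
  segs_in_wedge : ∀ k ≤ n, ∀ t : ℝ, 0 < t → t < 1 →
    (1 - t) • q k + t • q (k + 1) ∈ wedge γ
  reflects : ∀ k, 1 ≤ k → k ≤ n →
    (‖q (k + 1) - q k‖)⁻¹ • (q (k + 1) - q k) =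
      reflDir (lineDir γ (horiz k)) ((‖q k - q (k - 1)‖)⁻¹ • (q k - q (k - 1)))

/-- The total length of a closed `n`-bounce billiard path. -/
def totalLength {γ : ℝ} {p : E2} {n : ℕ} (P : ClosedBounce γ p n) : ℝ :=
  ∑ k ∈ Finset.range (n + 1), ‖P.q (k + 1) - P.q k‖

/-! Unfold the path: reflecting everything after the `k`-th bounce in the mirrors of bounces
`k, …, 1` straightens the path into a single segment from `p` to `U p`, where `U` is the
composite of all `2m` reflections. Consecutive mirrors are the two sides of the wedge, so `U` is
the rotation about the vertex by `±2mγ`, and the length is `‖U p - p‖ = 2R sin(mγ)`.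
The same picture gives uniqueness. Once the line of the first bounce is chosen, `U`, and with it
the initial direction `(U p - p) / ‖U p - p‖`, is determined; every later bounce point is then
the intersection of the current ray with the next mirror, which is unique because no segment of
the path runs along a mirror. Reversing a path of even length changes the line of the first
bounce, which accounts for the second path. -/

@[simp] lemma pt_apply_zero (x y : ℝ) : pt x y 0 = x := rfl

@[simp] lemma pt_apply_one (x y : ℝ) : pt x y 1 = y := rfl

lemma E2.ext {u v : E2} (h0 : u 0 = v 0) (h1 : u 1 = v 1) : u = v := by
  ext i; fin_cases i <;> assumption

lemma E2.inner_eq (u v : E2) : inner ℝ u v = u 0 * v 0 + u 1 * v 1 := by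
  simp [PiLp.inner_apply, Fin.sum_univ_two, mul_comm]

lemma E2.norm_sq_eq (u : E2) : ‖u‖ ^ 2 = u 0 ^ 2 + u 1 ^ 2 := by
  simp [EuclideanSpace.norm_sq_eq, Fin.sum_univ_two]

lemma reflDir_eq_reflection (d v : E2) : reflDir d v = (ℝ ∙ d).reflection v := by
  rw [Submodule.reflection_singleton_apply, reflDir, real_inner_self_eq_norm_sq,
    real_inner_comm]
  simp only [RCLike.ofReal_real_eq_id, id, ← Nat.cast_smul_eq_nsmul ℝ, smul_smul]
  ring_nf

def mirror (γ : ℝ) (b : Bool) : E2 ≃ₗᵢ[ℝ] E2 := (ℝ ∙ lineDir γ b).reflection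

lemma mirror_true_apply (γ : ℝ) (v : E2) : mirror γ true v = pt (v 0) (-v 1) := by
  rw [mirror, ← reflDir_eq_reflection]
  apply E2.ext <;> simp only [reflDir, lineDir, E2.inner_eq, if_true, PiLp.sub_apply,
    PiLp.smul_apply, smul_eq_mul, pt_apply_zero, pt_apply_one] <;> ring

lemma mirror_false_apply (γ : ℝ) (v : E2) :
    mirror γ false v =
      pt (cos (2 * γ) * v 0 + sin (2 * γ) * v 1) (sin (2 * γ) * v 0 - cos (2 * γ) * v 1) := by
  rw [mirror, ← reflDir_eq_reflection]
  have hd : cos γ * cos γ + sin γ * sin γ = 1 := by rw [← sq, ← sq, cos_sq_add_sin_sq]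
  apply E2.ext <;> simp only [reflDir, lineDir, E2.inner_eq, Bool.false_eq_true, if_false,
    PiLp.sub_apply, PiLp.smul_apply, smul_eq_mul, pt_apply_zero, pt_apply_one, hd, div_one,
    cos_two_mul, sin_two_mul]
  · ring
  · linear_combination 2 * v 1 * sin_sq_add_cos_sq γ

def rotate (θ : ℝ) (v : E2) : E2 :=
  pt (cos θ * v 0 - sin θ * v 1) (sin θ * v 0 + cos θ * v 1)

lemma rotate_zero (v : E2) : rotate 0 v = v := by
  apply E2.ext <;> simp [rotate]

lemma rotate_rotate (θ φ : ℝ) (v : E2) : rotate θ (rotate φ v) = rotate (θ + φ) v := by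
  apply E2.ext <;> simp only [rotate, pt_apply_zero, pt_apply_one, cos_add, sin_add] <;> ring

lemma norm_rotate_two_mul_sub_self (θ : ℝ) (v : E2) :
    ‖rotate (2 * θ) v - v‖ = 2 * |sin θ| * ‖v‖ := by
  refine (sq_eq_sq₀ (norm_nonneg _) (by positivity)).mp ?_
  rw [mul_pow, mul_pow, sq_abs, E2.norm_sq_eq, E2.norm_sq_eq]
  simp only [rotate, PiLp.sub_apply, pt_apply_zero, pt_apply_one, cos_two_mul, sin_two_mul]
  linear_combination (4 * (v 0 ^ 2 + v 1 ^ 2) * (cos θ ^ 2 - 1)) * sin_sq_add_cos_sq θ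

lemma mirror_apply_mirror_not (γ : ℝ) (b : Bool) (v : E2) :
    mirror γ b (mirror γ (!b) v) = rotate (2 * if b then -γ else γ) v := by
  cases b <;> apply E2.ext <;>
    simp [mirror_true_apply, mirror_false_apply, rotate] <;> ring

lemma mem_span_lineDir_of_onBoundary {γ : ℝ} (hγ : cos γ ≠ 0) {b : Bool} {u : E2}
    (hu : onBoundary γ b u) : u ∈ ℝ ∙ lineDir γ b := by
  rw [Submodule.mem_span_singleton]
  cases b
  · refine ⟨u 0 / cos γ, E2.ext ?_ ?_⟩
    · simp [lineDir, hγ]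
    · simp only [onBoundary, Bool.false_eq_true, if_false, tan_eq_sin_div_cos] at hu
      simp only [lineDir, Bool.false_eq_true, if_false, PiLp.smul_apply, smul_eq_mul,
        pt_apply_one, hu]
      ring
  · exact ⟨u 0, E2.ext (by simp [lineDir]) (by simpa [lineDir, onBoundary, eq_comm] using hu)⟩

lemma mirror_apply_of_onBoundary {γ : ℝ} (hγ : cos γ ≠ 0) {b : Bool} {u : E2}
    (hu : onBoundary γ b u) : mirror γ b u = u :=
  Submodule.reflection_mem_subspace_eq_self (mem_span_lineDir_of_onBoundary hγ hu)

def boundaryNormal (γ : ℝ) (b : Bool) : E2 := if b then pt 0 1 else pt (-tan γ) 1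

lemma onBoundary_iff_inner_boundaryNormal {γ : ℝ} {b : Bool} {u : E2} :
    onBoundary γ b u ↔ inner ℝ u (boundaryNormal γ b) = 0 := by
  cases b
  · simp only [onBoundary, boundaryNormal, E2.inner_eq, Bool.false_eq_true, if_false,
      pt_apply_zero, pt_apply_one]
    constructor <;> intro h <;> linarith
  · simp [onBoundary, boundaryNormal, E2.inner_eq]

lemma not_onBoundary_of_mem_wedge {γ : ℝ} {b : Bool} {u : E2} (hu : u ∈ wedge γ) :
    ¬ onBoundary γ b u := by
  obtain ⟨-, h1, h2⟩ := hu
  cases b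
  · exact h2.ne
  · exact h1.ne'

def unfolding (γ : ℝ) (h : ℕ → Bool) : ℕ → E2 ≃ₗᵢ[ℝ] E2
  | 0 => LinearIsometryEquiv.refl ℝ E2
  | k + 1 => (mirror γ (h (k + 1))).trans (unfolding γ h k)

lemma unfolding_zero_apply (γ : ℝ) (h : ℕ → Bool) (v : E2) : unfolding γ h 0 v = v := rfl

lemma unfolding_succ_apply (γ : ℝ) (h : ℕ → Bool) (k : ℕ) (v : E2) :
    unfolding γ h (k + 1) v = unfolding γ h k (mirror γ (h (k + 1)) v) := rfl

lemma unfolding_congr {γ : ℝ} {h h' : ℕ → Bool} {k : ℕ}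
    (he : ∀ j, 1 ≤ j → j ≤ k → h j = h' j) : unfolding γ h k = unfolding γ h' k := by
  induction k with
  | zero => rfl
  | succ k ih =>
    rw [unfolding, unfolding, ih fun j hj hjk => he j hj (by omega), he (k + 1) (by omega) le_rfl]

namespace ClosedBounce

variable {γ : ℝ} {p : E2} {n : ℕ}

def dir (P : ClosedBounce γ p n) (k : ℕ) : E2 :=
  ‖P.q (k + 1) - P.q k‖⁻¹ • (P.q (k + 1) - P.q k)

lemma norm_q_succ_sub_ne_zero (P : ClosedBounce γ p n) {k : ℕ} (hk : k ≤ n) :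
    ‖P.q (k + 1) - P.q k‖ ≠ 0 :=
  norm_ne_zero_iff.mpr (sub_ne_zero.mpr (P.distinct k hk).symm)

lemma norm_dir (P : ClosedBounce γ p n) {k : ℕ} (hk : k ≤ n) : ‖P.dir k‖ = 1 := by
  rw [dir, norm_smul, norm_inv, norm_norm, inv_mul_cancel₀ (P.norm_q_succ_sub_ne_zero hk)]

lemma q_succ (P : ClosedBounce γ p n) {k : ℕ} (hk : k ≤ n) :
    P.q (k + 1) = P.q k + ‖P.q (k + 1) - P.q k‖ • P.dir k := by
  rw [dir, smul_smul, mul_inv_cancel₀ (P.norm_q_succ_sub_ne_zero hk), one_smul, add_sub_cancel]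

lemma dir_eq_mirror (P : ClosedBounce γ p n) {k : ℕ} (hk1 : 1 ≤ k) (hk : k ≤ n) :
    P.dir k = mirror γ (P.horiz k) (P.dir (k - 1)) := by
  have h := P.reflects k hk1 hk
  rw [reflDir_eq_reflection] at h
  rwa [dir, dir, Nat.sub_add_cancel hk1]

lemma unfolding_dir (P : ClosedBounce γ p n) {k : ℕ} (hk : k ≤ n) :
    unfolding γ P.horiz k (P.dir k) = P.dir 0 := by
  induction k with
  | zero => rfl
  | succ k ih =>
    rw [unfolding_succ_apply, P.dir_eq_mirror (by omega) hk, Nat.add_sub_cancel, mirror,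
      Submodule.reflection_reflection, ih (by omega)]

lemma unfolding_q_succ (hγ : cos γ ≠ 0) (P : ClosedBounce γ p n) {j : ℕ} (hj : j ≤ n) :
    unfolding γ P.horiz j (P.q (j + 1)) =
      p + (∑ k ∈ Finset.range (j + 1), ‖P.q (k + 1) - P.q k‖) • P.dir 0 := by
  induction j with
  | zero =>
    rw [zero_add, Finset.sum_range_one]
    exact (P.q_succ hj).trans (congrArg (· + _) P.start)
  | succ j ih =>
    rw [P.q_succ hj, map_add, map_smul, P.unfolding_dir hj, unfolding_succ_apply,
      mirror_apply_of_onBoundary hγ (P.onLine (j + 1) (by omega) hj), ih (by omega),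
      Finset.sum_range_succ _ (j + 1), add_smul, add_assoc]

lemma unfolding_sub_self (hγ : cos γ ≠ 0) (P : ClosedBounce γ p n) :
    unfolding γ P.horiz n p - p = totalLength P • P.dir 0 := by
  have h := P.unfolding_q_succ hγ le_rfl
  rw [P.closes] at h
  rw [h, add_sub_cancel_left, totalLength]

lemma totalLength_pos (P : ClosedBounce γ p n) : 0 < totalLength P :=
  (norm_pos_iff.mpr (sub_ne_zero.mpr (P.distinct 0 n.zero_le).symm)).trans_le
    (Finset.single_le_sum (f := fun k => ‖P.q (k + 1) - P.q k‖) (fun _ _ => norm_nonneg _)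
      (Finset.mem_range.mpr n.succ_pos))

lemma totalLength_eq_norm_unfolding_sub (hγ : cos γ ≠ 0) (P : ClosedBounce γ p n) :
    totalLength P = ‖unfolding γ P.horiz n p - p‖ := by
  rw [P.unfolding_sub_self hγ, norm_smul, P.norm_dir n.zero_le, mul_one,
    Real.norm_of_nonneg P.totalLength_pos.le]

lemma inner_dir_boundaryNormal_ne_zero (P : ClosedBounce γ p n) {k : ℕ} (hk : k < n) :
    inner ℝ (P.dir k) (boundaryNormal γ (P.horiz (k + 1))) ≠ 0 := by
  set ν := boundaryNormal γ (P.horiz (k + 1))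
  intro hdir
  have hq : inner ℝ (P.q (k + 1)) ν = 0 :=
    onBoundary_iff_inner_boundaryNormal.mp (P.onLine (k + 1) (by omega) hk)
  have hstep : inner ℝ (P.q (k + 1) - P.q k) ν = 0 := by
    rw [sub_eq_iff_eq_add'.mpr (P.q_succ hk.le), real_inner_smul_left, hdir, mul_zero]
  -- the segment from `q k` to `q (k+1)` would lie on the boundary line of `q (k+1)`
  refine not_onBoundary_of_mem_wedge (b := P.horiz (k + 1))
    (P.segs_in_wedge k hk.le (1 / 2) (by norm_num) (by norm_num))
    (onBoundary_iff_inner_boundaryNormal.mpr ?_)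
  rw [show (1 - 1 / 2 : ℝ) • P.q k + (1 / 2 : ℝ) • P.q (k + 1) =
      P.q (k + 1) - (1 / 2 : ℝ) • (P.q (k + 1) - P.q k) by module,
    inner_sub_left, real_inner_smul_left, hq, hstep]
  ring

lemma inner_q_add_inner_dir (P : ClosedBounce γ p n) {k : ℕ} (hk : k < n) :
    inner ℝ (P.q k) (boundaryNormal γ (P.horiz (k + 1))) + ‖P.q (k + 1) - P.q k‖ *
      inner ℝ (P.dir k) (boundaryNormal γ (P.horiz (k + 1))) = 0 := by
  rw [← real_inner_smul_left, ← inner_add_left, ← P.q_succ hk.le]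
  exact onBoundary_iff_inner_boundaryNormal.mp (P.onLine (k + 1) (by omega) hk)

lemma horiz_eq_of_horiz_one_eq {P P' : ClosedBounce γ p n} (h : P'.horiz 1 = P.horiz 1) :
    ∀ k, 1 ≤ k → k ≤ n → P'.horiz k = P.horiz k
  | 0, hk, _ => absurd hk (by omega)
  | 1, _, _ => h
  | k + 2, _, hk => by
    rw [P'.alt (k + 1) (by omega) (by omega), P.alt (k + 1) (by omega) (by omega),
      horiz_eq_of_horiz_one_eq h (k + 1) (by omega) (by omega)]

theorem q_eq_of_horiz_one_eq (hγ : cos γ ≠ 0) {P P' : ClosedBounce γ p n}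
    (h : P'.horiz 1 = P.horiz 1) : ∀ k ≤ n + 1, P'.q k = P.q k := by
  have hU : ∀ k ≤ n, unfolding γ P'.horiz k = unfolding γ P.horiz k := fun k hk =>
    unfolding_congr fun j hj hjk => horiz_eq_of_horiz_one_eq h j hj (hjk.trans hk)
  have hL : totalLength P' = totalLength P := by
    rw [P.totalLength_eq_norm_unfolding_sub hγ, P'.totalLength_eq_norm_unfolding_sub hγ,
      hU n le_rfl]
  have hdir₀ : P'.dir 0 = P.dir 0 := by
    have h' := P'.unfolding_sub_self hγ
    rw [hU n le_rfl, P.unfolding_sub_self hγ, hL] at h'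
    exact (smul_right_injective E2 P.totalLength_pos.ne' h').symm
  have hdir : ∀ k ≤ n, P'.dir k = P.dir k := fun k hk =>
    (unfolding γ P.horiz k).injective <| by
      rw [← hU k hk, P'.unfolding_dir hk, hU k hk, P.unfolding_dir hk, hdir₀]
  intro k hk
  induction k with
  | zero => rw [P'.start, P.start]
  | succ k ih =>
    rcases (Nat.lt_or_eq_of_le (Nat.le_of_succ_le_succ hk)) with hk | rfl
    · have hb := horiz_eq_of_horiz_one_eq h (k + 1) (by omega) hk
      have hq := ih (by omega)
      have h₂ := P'.inner_q_add_inner_dir hk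
      rw [hb, hq, hdir k hk.le] at h₂
      have ht : ‖P'.q (k + 1) - P.q k‖ = ‖P.q (k + 1) - P.q k‖ :=
        mul_right_cancel₀ (P.inner_dir_boundaryNormal_ne_zero hk)
          (by linarith [P.inner_q_add_inner_dir hk])
      rw [P'.q_succ hk.le, hq, ht, hdir k hk.le, ← P.q_succ hk.le]
    · rw [P'.closes, P.closes]

lemma horiz_two_mul_add_one (P : ClosedBounce γ p n) :
    ∀ j, 2 * j + 1 ≤ n → P.horiz (2 * j + 1) = P.horiz 1
  | 0, _ => rfl
  | j + 1, hj => by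
    rw [show 2 * (j + 1) + 1 = 2 * j + 1 + 1 + 1 by ring, P.alt _ (by omega) (by omega),
      P.alt _ (by omega) (by omega), Bool.not_not, P.horiz_two_mul_add_one j (by omega)]

lemma unfolding_two_mul_apply (P : ClosedBounce γ p n) {j : ℕ} (hj : 2 * j ≤ n) (v : E2) :
    unfolding γ P.horiz (2 * j) v = rotate (2 * (j * if P.horiz 1 then -γ else γ)) v := by
  induction j generalizing v with
  | zero => simp [unfolding_zero_apply, rotate_zero]
  | succ j ih =>
    rw [show 2 * (j + 1) = 2 * j + 1 + 1 by ring, unfolding_succ_apply, unfolding_succ_apply,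
      P.alt (2 * j + 1) (by omega) (by omega), P.horiz_two_mul_add_one j (by omega),
      mirror_apply_mirror_not, ih (by omega), rotate_rotate]
    push_cast
    ring_nf

theorem totalLength_eq_of_two_mul {m : ℕ} (hγ : cos γ ≠ 0) (P : ClosedBounce γ p (2 * m)) :
    totalLength P = 2 * |sin (m * γ)| * ‖p‖ := by
  rw [P.totalLength_eq_norm_unfolding_sub hγ, P.unfolding_two_mul_apply le_rfl,
    norm_rotate_two_mul_sub_self]
  cases P.horiz 1 <;> simp [mul_neg, sin_neg, abs_neg]

lemma inv_norm_smul_sub_succ (P : ClosedBounce γ p n) (k : ℕ) :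
    ‖P.q k - P.q (k + 1)‖⁻¹ • (P.q k - P.q (k + 1)) = -P.dir k := by
  rw [norm_sub_rev, dir, ← smul_neg, neg_sub]

def reverse (P : ClosedBounce γ p n) : ClosedBounce γ p n where
  q k := P.q (n + 1 - k)
  horiz k := P.horiz (n + 1 - k)
  alt k hk1 hk2 := by
    rw [show n + 1 - k = n - k + 1 by omega, show n + 1 - (k + 1) = n - k by omega,
      P.alt (n - k) (by omega) (by omega), Bool.not_not]
  start := by simpa using P.closes
  closes := by simpa using P.start
  distinct k hk := by
    rw [show n + 1 - k = n - k + 1 by omega, show n + 1 - (k + 1) = n - k by omega]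
    exact (P.distinct (n - k) (by omega)).symm
  bounce_ne_vertex k hk1 hk2 := P.bounce_ne_vertex _ (by omega) (by omega)
  onLine k hk1 hk2 := P.onLine _ (by omega) (by omega)
  segs_in_wedge k hk t ht0 ht1 := by
    rw [show n + 1 - k = n - k + 1 by omega, show n + 1 - (k + 1) = n - k by omega, add_comm]
    simpa using P.segs_in_wedge (n - k) (by omega) (1 - t) (by linarith) (by linarith)
  reflects k hk1 hk2 := by
    obtain ⟨j, rfl⟩ : ∃ j, n = k + j := ⟨n - k, by omega⟩
    rw [show k + j + 1 - (k + 1) = j by omega, show k + j + 1 - k = j + 1 by omega,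
      show k + j + 1 - (k - 1) = j + 1 + 1 by omega, inv_norm_smul_sub_succ,
      inv_norm_smul_sub_succ, reflDir_eq_reflection, map_neg, ← mirror,
      P.dir_eq_mirror (k := j + 1) (by omega) (by omega), Nat.add_sub_cancel, mirror,
      Submodule.reflection_reflection]

lemma reverse_horiz_one {m : ℕ} (hm : 1 ≤ m) (P : ClosedBounce γ p (2 * m)) :
    P.reverse.horiz 1 = !P.horiz 1 := by
  obtain ⟨j, rfl⟩ : ∃ j, m = j + 1 := ⟨m - 1, by omega⟩
  change P.horiz (2 * (j + 1) + 1 - 1) = _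
  rw [show 2 * (j + 1) + 1 - 1 = 2 * j + 1 + 1 by omega, P.alt _ (by omega) (by omega),
    P.horiz_two_mul_add_one j (by omega)]

end ClosedBounce

theorem even_bounce_length_and_uniqueness_general (m : ℕ) (hm : 1 ≤ m) (γ : ℝ)
    (hγ0 : 0 < γ) (hγ1 : γ < π / 2) (hγm : γ < π / (2 * m))
    (R ψ : ℝ) (hR : 0 < R)
    (p : E2) (hp : p = pt (R * Real.sin ψ) (R * Real.cos ψ)) :
    (∀ P : ClosedBounce γ p (2 * m), totalLength P = 2 * R * Real.sin (m * γ)) ∧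
    (∀ P P' : ClosedBounce γ p (2 * m),
      (∀ k ≤ 2 * m + 1, P'.q k = P.q k) ∨
      (∀ k ≤ 2 * m + 1, P'.q k = P.q (2 * m + 1 - k))) := by
  have hcos : cos γ ≠ 0 := (cos_pos_of_mem_Ioo ⟨by linarith [pi_pos], hγ1⟩).ne'
  have hmγ : m * γ < π / 2 := by
    rw [lt_div_iff₀ (by positivity)] at hγm
    linarith
  have hsin : 0 ≤ sin (m * γ) := sin_nonneg_of_nonneg_of_le_pi (by positivity) (by linarith)
  have hnorm : ‖p‖ = R := by
    rw [← sq_eq_sq₀ (norm_nonneg _) hR.le, E2.norm_sq_eq, hp, pt_apply_zero, pt_apply_one]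
    linear_combination R ^ 2 * sin_sq_add_cos_sq ψ
  refine ⟨fun P => ?_, fun P P' => ?_⟩
  · rw [P.totalLength_eq_of_two_mul hcos, abs_of_nonneg hsin, hnorm]
    ring
  · obtain h | h : P'.horiz 1 = P.horiz 1 ∨ P'.horiz 1 = P.reverse.horiz 1 := by
      rw [P.reverse_horiz_one hm]
      cases P'.horiz 1 <;> cases P.horiz 1 <;> simp
    · exact .inl (ClosedBounce.q_eq_of_horiz_one_eq hcos h)
    · exact .inr (ClosedBounce.q_eq_of_horiz_one_eq hcos h)

/-- For an integer `m ≥ 1` and `γ ∈ (0, π/2)` with `γ < π/(2m)`, every closed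
`2m`-bounce billiard path based at the point `(R sin ψ, R cos ψ)` of the wedge
(with `R > 0` and `π/2 − γ < ψ < π/2`) has total length `2R·sin(mγ)`; moreover
there are at most two such paths, and if there are two then one is the reverse
of the other. -/
theorem even_bounce_length_and_uniqueness (m : ℕ) (hm : 1 ≤ m) (γ : ℝ)
    (hγ0 : 0 < γ) (hγ1 : γ < π / 2) (hγm : γ < π / (2 * m))
    (R ψ : ℝ) (hR : 0 < R) (hψ1 : π / 2 - γ < ψ) (hψ2 : ψ < π / 2)
    (p : E2) (hp : p = pt (R * Real.sin ψ) (R * Real.cos ψ)) :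
    (∀ P : ClosedBounce γ p (2 * m), totalLength P = 2 * R * Real.sin (m * γ)) ∧
    (∀ P P' : ClosedBounce γ p (2 * m),
      (∀ k ≤ 2 * m + 1, P'.q k = P.q k) ∨
      (∀ k ≤ 2 * m + 1, P'.q k = P.q (2 * m + 1 - k))) :=
  even_bounce_length_and_uniqueness_general m hm γ hγ0 hγ1 hγm R ψ hR p hp
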